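/- The function Δ₆ has a first-order zero at s = 1/2 with expansion Δ₆(1/2 + δ) = ((3γ − 2·log(2π) + ψ(1/2))/(2·ζ(1/2)))·δ + O(δ²); precisely, the limit of Δ₆(1/2 + h)/h as h → 0 (h ≠ 0, h ∈ ℂ) equals (3γ − 2·log(2π) + ψ(1/2))/(2·ζ(1/2)), where γ is the Euler–Mascheroni constant, ψ(1/2) = Γ′(1/2)/Γ(1/2) is the digamma function at 1/2 (expressible as deriv Real.Gamma (1/2) / Real.Gamma (1/2)), and ζ(1/2) is the value of the Riemann zeta function at 1/2. -/

import Mathlib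

open Filter

noncomputable def D (s : ℂ) : ℂ :=
  ((Real.pi ^ (-(1/4) : ℝ) : ℝ) * Complex.Gamma s +
    (Real.pi ^ ((1/4) : ℝ) : ℝ) * Complex.Gamma (s - 1/2)) / Complex.Gamma (s - 1/4)

noncomputable def Δ₆ (s : ℂ) : ℂ :=
  (completedRiemannZeta (2 * s) + completedRiemannZeta (2 * s - 1)) /
    (completedRiemannZeta (2 * s - 1/2) * D s)

/-!
Write `Λ s = Λ₀ s - 1 / s - 1 / (1 - s)` with `Λ₀` entire and `Λ₀ (1 - s) = Λ₀ s`. In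
`Λ (2s) + Λ (2s - 1)` the poles at `2s = 1` cancel, so at `s = 1/2` the numerator of `Δ₆` tends to
`2 Λ₀ 1 - 2 = γ - log 4π`. In the denominator the pole of `Γ (s - 1/2)` gives
`h · D (1/2 + h) → π^(1/4) / Γ(1/4)`, and `Λ (1/2) · π^(1/4) / Γ(1/4) = ζ (1/2)`. Hence
`Δ₆ (1/2 + h) / h → (γ - log 4π) / ζ (1/2)`, the stated constant because `ψ (1/2) = -γ - 2 log 2`.

The limit is finite because `ζ (1/2) ≠ 0`: analytic continuation of
`(1 - 2^(1-s)) ζ s = ∑ ((2k+1)^(-s) - (2k+2)^(-s))` from `Re s > 1` to `Re s > 0`, where for real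
`s` every term is positive.
-/

open Complex Set Topology

lemma norm_ofReal_cpow_neg_sub_le {x : ℝ} (hx : 0 < x) {s : ℂ} (hs : 0 < s.re) :
    ‖(x : ℂ) ^ (-s) - ((x + 1 : ℝ) : ℂ) ^ (-s)‖ ≤ ‖s‖ * x ^ (-s.re - 1) := by
  have hs₀ : -s ≠ 0 := neg_ne_zero.2 fun h => by simp [h] at hs
  have hderiv : ∀ t ∈ Icc x (x + 1), HasDerivWithinAt (fun t : ℝ => (t : ℂ) ^ (-s))
      (-s * (t : ℂ) ^ (-s - 1)) (Icc x (x + 1)) t := fun t ht =>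
    (hasDerivAt_ofReal_cpow_const (hx.trans_le ht.1).ne' hs₀).hasDerivWithinAt
  have hbound : ∀ t ∈ Ico x (x + 1), ‖-s * (t : ℂ) ^ (-s - 1)‖ ≤ ‖s‖ * x ^ (-s.re - 1) := by
    intro t ht
    rw [norm_mul, norm_neg, norm_cpow_eq_rpow_re_of_pos (hx.trans_le ht.1)]
    gcongr
    exact Real.rpow_le_rpow_of_nonpos hx ht.1 (by simp; linarith)
  have := norm_image_sub_le_of_norm_deriv_le_segment' hderiv hbound (x + 1)
    (right_mem_Icc.2 (by linarith))
  rw [norm_sub_rev]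
  simpa using this

lemma summable_two_mul_add_one_rpow {p : ℝ} (hp : p < -1) :
    Summable fun k : ℕ => (2 * k + 1 : ℝ) ^ p := by
  have h := (summable_nat_add_iff 1).2 (Real.summable_nat_rpow.2 hp)
  refine Summable.of_nonneg_of_le (fun k => by positivity) (fun k => ?_) h
  push_cast
  exact Real.rpow_le_rpow_of_nonpos (by positivity) (by linarith [k.cast_nonneg (α := ℝ)])
    (by linarith)

-- Terms are paired so that the series converges absolutely for `0 < Re s`.
noncomputable def dirichletEtaTerm (s : ℂ) (k : ℕ) : ℂ :=
  (2 * k + 1 : ℂ) ^ (-s) - (2 * k + 2 : ℂ) ^ (-s)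

noncomputable def dirichletEta (s : ℂ) : ℂ := ∑' k, dirichletEtaTerm s k

lemma norm_dirichletEtaTerm_le {a : ℝ} {s : ℂ} (ha : 0 < a) (hs : a ≤ s.re) (k : ℕ) :
    ‖dirichletEtaTerm s k‖ ≤ ‖s‖ * (2 * k + 1 : ℝ) ^ (-a - 1) := by
  have hk : (1 : ℝ) ≤ 2 * k + 1 := by linarith [k.cast_nonneg (α := ℝ)]
  calc ‖dirichletEtaTerm s k‖
        = ‖((2 * k + 1 : ℝ) : ℂ) ^ (-s) - ((2 * k + 1 + 1 : ℝ) : ℂ) ^ (-s)‖ := by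
        unfold dirichletEtaTerm; push_cast; ring_nf
    _ ≤ ‖s‖ * (2 * k + 1 : ℝ) ^ (-s.re - 1) :=
        norm_ofReal_cpow_neg_sub_le (by positivity) (ha.trans_le hs)
    _ ≤ ‖s‖ * (2 * k + 1 : ℝ) ^ (-a - 1) := by
        gcongr

lemma summable_dirichletEtaTerm {s : ℂ} (hs : 0 < s.re) : Summable (dirichletEtaTerm s) :=
  .of_norm_bounded ((summable_two_mul_add_one_rpow (p := -s.re - 1) (by linarith)).mul_left ‖s‖)
    (norm_dirichletEtaTerm_le hs le_rfl)

lemma differentiableOn_dirichletEta : DifferentiableOn ℂ dirichletEta {s | 0 < s.re} := by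
  intro s₀ (hs₀ : 0 < s₀.re)
  set U := {s : ℂ | s₀.re / 2 < s.re} ∩ Metric.ball 0 (‖s₀‖ + 1)
  have hU : IsOpen U := (isOpen_lt continuous_const continuous_re).inter Metric.isOpen_ball
  have hs₀U : s₀ ∈ U := ⟨show s₀.re / 2 < s₀.re by linarith, by simp⟩
  refine (DifferentiableOn.differentiableAt ?_ (hU.mem_nhds hs₀U)).differentiableWithinAt
  have hu := (summable_two_mul_add_one_rpow (p := -(s₀.re / 2) - 1) (by linarith)).mul_left
    (‖s₀‖ + 1)
  refine differentiableOn_tsum_of_summable_norm hu (fun k => ?_) hU (fun k s hs => ?_)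
  · have h1 : (2 * k + 1 : ℂ) ≠ 0 := by exact_mod_cast (2 * k).succ_ne_zero
    have h2 : (2 * k + 2 : ℂ) ≠ 0 := by exact_mod_cast (2 * k + 1).succ_ne_zero
    unfold dirichletEtaTerm
    fun_prop (disch := simp [h1, h2])
  · calc ‖dirichletEtaTerm s k‖ ≤ ‖s‖ * (2 * k + 1 : ℝ) ^ (-(s₀.re / 2) - 1) :=
          norm_dirichletEtaTerm_le (by linarith) hs.1.le k
      _ ≤ (‖s₀‖ + 1) * (2 * k + 1 : ℝ) ^ (-(s₀.re / 2) - 1) := by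
          gcongr
          exact (mem_ball_zero_iff.1 hs.2).le

lemma dirichletEta_eq_of_one_lt_re {s : ℂ} (hs : 1 < s.re) :
    dirichletEta s = (1 - 2 ^ (1 - s)) * riemannZeta s := by
  set f : ℕ → ℂ := fun n => ((n : ℂ) + 1) ^ (-s)
  have hf : Summable f := by
    have := (summable_nat_add_iff 1).2 (Complex.summable_one_div_nat_cpow.2 hs)
    simpa [f, cpow_neg] using this
  have hζ : riemannZeta s = ∑' n, f n := by
    simp [f, zeta_eq_tsum_one_div_nat_add_one_cpow hs, cpow_neg]
  have heven : Summable fun k => f (2 * k) :=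
    hf.comp_injective (mul_right_injective₀ two_ne_zero)
  have hodd : Summable fun k => f (2 * k + 1) :=
    hf.comp_injective ((add_left_injective 1).comp (mul_right_injective₀ two_ne_zero))
  have hsplit : ∑' k, f (2 * k) + ∑' k, f (2 * k + 1) = riemannZeta s := by
    rw [hζ]; exact tsum_even_add_odd heven hodd
  have hodd_eq : ∑' k, f (2 * k + 1) = 2 ^ (-s) * riemannZeta s := by
    rw [hζ, ← tsum_mul_left]
    congr 1 with k
    have : ((2 * k + 1 : ℕ) : ℂ) + 1 = ((2 : ℝ) : ℂ) * ((k + 1 : ℝ) : ℂ) := by push_cast; ring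
    simp only [f, this, mul_cpow_ofReal_nonneg zero_le_two (by positivity : (0 : ℝ) ≤ k + 1)]
    push_cast; rfl
  have hη : dirichletEta s = ∑' k, f (2 * k) - ∑' k, f (2 * k + 1) := by
    rw [dirichletEta, ← heven.tsum_sub hodd]
    congr 1 with k
    simp only [dirichletEtaTerm, f]; push_cast; ring_nf
  rw [cpow_neg] at hodd_eq
  rw [hη, cpow_sub _ _ two_ne_zero, cpow_one]
  linear_combination hsplit - 2 * hodd_eq

-- `riemannZeta₁` is the entire function `(s - 1) ζ s`; with the pole removed, the identity theorem
-- applies on the whole (convex) half-plane.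
lemma sub_one_mul_dirichletEta {s : ℂ} (hs : 0 < s.re) :
    (s - 1) * dirichletEta s = (1 - 2 ^ (1 - s)) * riemannZeta₁ s := by
  have hU : IsOpen {s : ℂ | 0 < s.re} := isOpen_lt continuous_const continuous_re
  have hη : AnalyticOnNhd ℂ (fun s => (s - 1) * dirichletEta s) {s | 0 < s.re} :=
    ((differentiableOn_id.sub_const 1).mul differentiableOn_dirichletEta).analyticOnNhd hU
  have hζ : AnalyticOnNhd ℂ (fun s => (1 - 2 ^ (1 - s)) * riemannZeta₁ s) {s | 0 < s.re} := by
    refine DifferentiableOn.analyticOnNhd ?_ hU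
    exact (Differentiable.differentiableOn (by fun_prop (disch := norm_num))).mul
      differentiable_riemannZeta₁.differentiableOn
  refine hη.eqOn_of_preconnected_of_eventuallyEq hζ (convex_halfSpace_re_gt 0).isPreconnected
    (show (0 : ℝ) < (2 : ℂ).re by norm_num) ?_ hs
  filter_upwards [(isOpen_lt continuous_const continuous_re).mem_nhds
    (show (1 : ℝ) < (2 : ℂ).re by norm_num)] with s (hs : 1 < s.re)
  have hs₁ : s - 1 ≠ 0 := sub_ne_zero.2 fun h => by simp [h] at hs
  rw [dirichletEta_eq_of_one_lt_re hs, riemannZeta_eq_inv_sub_mul (sub_ne_zero.1 hs₁)]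
  field_simp

lemma re_dirichletEta_pos {σ : ℝ} (hσ : 0 < σ) : 0 < (dirichletEta σ).re := by
  have hterm (k : ℕ) :
      (dirichletEtaTerm σ k).re = (2 * k + 1 : ℝ) ^ (-σ) - (2 * k + 2 : ℝ) ^ (-σ) := by
    have h1 : (2 * k + 1 : ℂ) = ((2 * k + 1 : ℝ) : ℂ) := by push_cast; rfl
    have h2 : (2 * k + 2 : ℂ) = ((2 * k + 2 : ℝ) : ℂ) := by push_cast; rfl
    rw [dirichletEtaTerm, h1, h2, ← ofReal_neg, ← ofReal_cpow (by positivity),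
      ← ofReal_cpow (by positivity), ← ofReal_sub, ofReal_re]
  have hpos (k : ℕ) : 0 < (dirichletEtaTerm σ k).re := by
    rw [hterm, sub_pos]
    exact Real.rpow_lt_rpow_of_neg (by positivity) (by linarith) (by linarith)
  have hsum := summable_dirichletEtaTerm (s := σ) (by simpa using hσ)
  rw [dirichletEta, re_tsum hsum]
  exact (hsum.mapL reCLM).tsum_pos (fun k => (hpos k).le) 0 (hpos 0)

lemma riemannZeta_ofReal_ne_zero {σ : ℝ} (hσ : 0 < σ) (hσ₁ : σ ≠ 1) : riemannZeta σ ≠ 0 := by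
  intro hζ
  have hσ₁' : (σ : ℂ) - 1 ≠ 0 := sub_ne_zero.2 (by exact_mod_cast hσ₁)
  have h := sub_one_mul_dirichletEta (s := σ) (by simpa using hσ)
  rw [riemannZeta_eq_inv_sub_mul (sub_ne_zero.1 hσ₁'), inv_mul_eq_iff_eq_mul₀ hσ₁'] at hζ
  rw [hζ, mul_zero, mul_zero, mul_eq_zero] at h
  rcases h with h | h
  · exact hσ₁' h
  · simpa [h] using re_dirichletEta_pos hσ

lemma completedRiemannZeta_add_completedRiemannZeta_sub_one (s : ℂ) :
    completedRiemannZeta s + completedRiemannZeta (s - 1) =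
      completedRiemannZeta₀ s + completedRiemannZeta₀ (s - 1) - 1 / s - 1 / (2 - s) := by
  rw [completedRiemannZeta_eq, completedRiemannZeta_eq, show 1 - (s - 1) = 2 - s by ring,
    show 1 - s = -(s - 1) by ring, div_neg]
  ring

lemma tendsto_completedRiemannZeta_add_completedRiemannZeta_sub_one :
    Tendsto (fun s => completedRiemannZeta s + completedRiemannZeta (s - 1)) (𝓝 1)
      (𝓝 (Real.eulerMascheroniConstant - log (4 * Real.pi))) := by
  simp only [completedRiemannZeta_add_completedRiemannZeta_sub_one]
  have hcont : ContinuousAt (fun s => completedRiemannZeta₀ s + completedRiemannZeta₀ (s - 1)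
      - 1 / s - 1 / (2 - s)) 1 := by
    have := differentiable_completedZeta₀.continuous
    fun_prop (disch := norm_num)
  convert hcont.tendsto using 2
  have h₀ : completedRiemannZeta₀ 0 = completedRiemannZeta₀ 1 := by
    simpa using completedRiemannZeta₀_one_sub 1
  norm_num [h₀, completedRiemannZeta₀_one]
  ring

lemma continuousAt_Gamma_of_re_pos {s : ℂ} (hs : 0 < s.re) : ContinuousAt Gamma s :=
  (differentiableAt_Gamma s fun m h => by
    have := congrArg re h
    simp at this
    linarith [m.cast_nonneg (α := ℝ)]).continuousAt

lemma tendsto_mul_D_one_half_add :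
    Tendsto (fun h => h * D (1 / 2 + h)) (𝓝[≠] 0)
      (𝓝 (((Real.pi ^ ((1 / 4) : ℝ) : ℝ) : ℂ) / Gamma (1 / 4))) := by
  have hD (h : ℂ) : h * D (1 / 2 + h) = (((Real.pi ^ (-(1 / 4) : ℝ) : ℝ) : ℂ) *
      (h * Gamma (1 / 2 + h)) + ((Real.pi ^ ((1 / 4) : ℝ) : ℝ) : ℂ) * (h * Gamma h)) /
        Gamma (1 / 4 + h) := by
    rw [D, show 1 / 2 + h - 1 / 2 = h by ring, show 1 / 2 + h - 1 / 4 = 1 / 4 + h by ring]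
    ring
  have hΓ (s : ℂ) (hs : 0 < s.re) : Tendsto (fun h => Gamma (s + h)) (𝓝[≠] 0) (𝓝 (Gamma s)) := by
    have : ContinuousAt (fun h => Gamma (s + h)) 0 :=
      (continuousAt_Gamma_of_re_pos (by simpa using hs)).comp' (by fun_prop)
    simpa using this.tendsto.mono_left nhdsWithin_le_nhds
  have hid : Tendsto (fun h : ℂ => h) (𝓝[≠] 0) (𝓝 0) := nhdsWithin_le_nhds
  simp only [hD]
  rw [show ((Real.pi ^ ((1 / 4) : ℝ) : ℝ) : ℂ) / Gamma (1 / 4) =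
    (((Real.pi ^ (-(1 / 4) : ℝ) : ℝ) : ℂ) * (0 * Gamma (1 / 2)) +
      ((Real.pi ^ ((1 / 4) : ℝ) : ℝ) : ℂ) * 1) / Gamma (1 / 4) by simp]
  exact ((tendsto_const_nhds.mul (hid.mul (hΓ (1 / 2) (by norm_num)))).add
    (tendsto_const_nhds.mul tendsto_self_mul_Gamma_nhds_zero)).div (hΓ (1 / 4) (by norm_num))
    (Gamma_ne_zero_of_re_pos (by norm_num))

lemma riemannZeta_one_half_eq_completedRiemannZeta_mul :
    riemannZeta (1 / 2) = completedRiemannZeta (1 / 2) *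
      (((Real.pi ^ ((1 / 4) : ℝ) : ℝ) : ℂ) / Gamma (1 / 4)) := by
  have hΓℝ : Gammaℝ (1 / 2) = ((Real.pi ^ (-(1 / 4) : ℝ) : ℝ) : ℂ) * Gamma (1 / 4) := by
    rw [Gammaℝ_def, ofReal_cpow Real.pi_pos.le]
    norm_num
  have hπ : ((Real.pi ^ (-(1 / 4) : ℝ) : ℝ) : ℂ) * ((Real.pi ^ ((1 / 4) : ℝ) : ℝ) : ℂ) = 1 := by
    rw [← ofReal_mul, ← Real.rpow_add Real.pi_pos]
    norm_num
  have hΓ : Gamma (1 / 4) ≠ 0 := Gamma_ne_zero_of_re_pos (by norm_num)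
  rw [riemannZeta_def_of_ne_zero (by norm_num), hΓℝ]
  field_simp
  linear_combination -completedRiemannZeta (1 / 2) * hπ

lemma three_mul_eulerMascheroni_sub_add_digamma_one_half :
    3 * Real.eulerMascheroniConstant - 2 * Real.log (2 * Real.pi) +
      deriv Real.Gamma (1 / 2) / Real.Gamma (1 / 2) =
    2 * (Real.eulerMascheroniConstant - Real.log (4 * Real.pi)) := by
  have hlog : Real.log (4 * Real.pi) = Real.log 2 + Real.log (2 * Real.pi) := by
    rw [← Real.log_mul two_ne_zero (by positivity)]
    ring_nf
  rw [Real.hasDerivAt_Gamma_one_half.deriv, Real.Gamma_one_half_eq, hlog]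
  field_simp
  ring

lemma Δ₆_one_half_add_div (h : ℂ) : Δ₆ (1 / 2 + h) / h =
    (completedRiemannZeta (2 * (1 / 2 + h)) + completedRiemannZeta (2 * (1 / 2 + h) - 1)) /
      (completedRiemannZeta (2 * (1 / 2 + h) - 1 / 2) * (h * D (1 / 2 + h))) := by
  rw [Δ₆, div_div, mul_assoc, mul_comm (D _)]

theorem Delta6_zero_at_half :
    Tendsto (fun h : ℂ => Δ₆ (1/2 + h) / h) (nhdsWithin 0 {0}ᶜ)
      (nhds (((3 * Real.eulerMascheroniConstant - 2 * Real.log (2 * Real.pi) +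
          deriv Real.Gamma (1/2) / Real.Gamma (1/2) : ℝ) : ℂ) /
        (2 * riemannZeta (1/2)))) := by
  have hlin : Tendsto (fun h : ℂ => 2 * (1 / 2 + h)) (𝓝[≠] 0) (𝓝 1) := by
    have : Continuous fun h : ℂ => 2 * (1 / 2 + h) := by fun_prop
    simpa using this.continuousAt.tendsto.mono_left (nhdsWithin_le_nhds (a := 0))
  have hnum := tendsto_completedRiemannZeta_add_completedRiemannZeta_sub_one.comp hlin
  have hΛ : Tendsto (fun h : ℂ => completedRiemannZeta (2 * (1 / 2 + h) - 1 / 2)) (𝓝[≠] 0)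
      (𝓝 (completedRiemannZeta (1 / 2))) := by
    have := (differentiableAt_completedZeta (s := 1 / 2) (by norm_num) (by norm_num)).continuousAt
    have hlin' := hlin.sub_const (1 / 2)
    rw [show (1 : ℂ) - 1 / 2 = 1 / 2 by norm_num] at hlin'
    exact this.tendsto.comp hlin'
  have hζ : riemannZeta (1 / 2) ≠ 0 := by
    simpa using riemannZeta_ofReal_ne_zero (σ := 1 / 2) (by norm_num) (by norm_num)
  have hlim := hnum.div (hΛ.mul tendsto_mul_D_one_half_add)
    (riemannZeta_one_half_eq_completedRiemannZeta_mul ▸ hζ)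
  rw [← riemannZeta_one_half_eq_completedRiemannZeta_mul] at hlim
  convert hlim using 2 with h
  · exact Δ₆_one_half_add_div h
  · rw [three_mul_eulerMascheroni_sub_add_digamma_one_half, ofReal_mul, ofReal_ofNat, ofReal_sub,
      ofReal_log (by positivity), mul_div_mul_left _ _ two_ne_zero]
    push_cast
    rfl
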